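/- For every C₀ ≥ 1 there is a constant C > 0 with the following property (near-field asymptote of the doubly periodic Newtonian potential). Let a be a positive definite Hermitian 2×2 complex matrix with A = det a ≥ 1 which is C₀-elliptic, and define γ(η₁, η₂, μ) = −(1/(8π²)) Σ_{(n₁,n₂)∈ℤ²} ( Q(η₁+n₁, η₂+n₂) + Aμ² )^{−3/2}. Then for every (η₁, η₂, μ) ∈ ℂ² × ℝ with (η₁, η₂, μ) ≠ 0, |Re η₁| ≤ 1/2, |Re η₂| ≤ 1/2 and ϱ ≤ A^{1/4} (where ϱ = √((A/𝔸)Qℝ(Im η₁, Im η₂) + Aμ²)), one has | γ(η₁, η₂, μ) + (1/(8π²))·( Q(η₁, η₂) + Aμ² )^{−3/2} | ≤ C·A^{−3/4}. -/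
import Mathlib


/-- The Hermitian form `Q(w) = a₁₁|w₁|² + a₂₂|w₂|² + 2Re(a₁₂ w₁ conj(w₂))`. -/
noncomputable def Qh (a11 a22 : ℝ) (a12 w1 w2 : ℂ) : ℝ :=
  a11 * Complex.normSq w1 + a22 * Complex.normSq w2 + 2 * (a12 * w1 * (starRingEnd ℂ) w2).re

/-- The real quadratic form `Qℝ(y) = a₁₁y₁² + 2Re(a₁₂)y₁y₂ + a₂₂y₂²`. -/
noncomputable def QR (a11 a22 : ℝ) (a12 : ℂ) (y1 y2 : ℝ) : ℝ :=
  a11 * y1 ^ 2 + 2 * a12.re * y1 * y2 + a22 * y2 ^ 2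

/-- The distance `ϱ = √((A/𝔸)Qℝ(y₁,y₂) + Aμ²)` with `A = det a`, `𝔸 = A + (Im a₁₂)²`. -/
noncomputable def rhoH (a11 a22 : ℝ) (a12 : ℂ) (y1 y2 μ : ℝ) : ℝ :=
  Real.sqrt (((a11 * a22 - Complex.normSq a12) /
      (a11 * a22 - Complex.normSq a12 + a12.im ^ 2)) * QR a11 a22 a12 y1 y2
    + (a11 * a22 - Complex.normSq a12) * μ ^ 2)

/-- `C₀`-ellipticity of the Hermitian matrix `a`. -/
def IsEllipticH (C₀ a11 a22 : ℝ) (a12 : ℂ) : Prop :=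
  ∀ w1 w2 : ℂ,
    C₀⁻¹ * Real.sqrt (a11 * a22 - Complex.normSq a12) *
        (Complex.normSq w1 + Complex.normSq w2) ≤ Qh a11 a22 a12 w1 w2 ∧
      Qh a11 a22 a12 w1 w2 ≤ C₀ * Real.sqrt (a11 * a22 - Complex.normSq a12) *
        (Complex.normSq w1 + Complex.normSq w2)

lemma sq_shift (x : ℝ) (k : ℤ) (hx : |x| ≤ 1/2) : (k:ℝ)^2/4 ≤ (x + k)^2 := by
  rcases eq_or_ne k 0 with rfl | hk
  · simp; positivity
  · have h1 : (1:ℝ) ≤ |(k:ℝ)| := by exact_mod_cast Int.one_le_abs hk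
    have h2 : |(k:ℝ)| - |x| ≤ |x + (k:ℝ)| := by
      have := abs_sub_abs_le_abs_sub (k:ℝ) (-x)
      simpa [abs_neg, add_comm, sub_neg_eq_add] using this
    have h3 : (0:ℝ) ≤ |(k:ℝ)| - |x| := by linarith
    have h4 : (|(k:ℝ)| - |x|)^2 ≤ (x + (k:ℝ))^2 := by
      calc (|(k:ℝ)| - |x|)^2 ≤ |x + (k:ℝ)|^2 := by
            apply sq_le_sq' <;> nlinarith [abs_nonneg (x + (k:ℝ))]
        _ = (x + (k:ℝ))^2 := sq_abs _
    nlinarith [sq_abs (k:ℝ), abs_nonneg x]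

lemma sum_g : Summable (fun n : ℤ × ℤ => ‖(![n.1, n.2] : Fin 2 → ℤ)‖ ^ (-(3:ℝ))) := by
  have h0 := EisensteinSeries.summable_one_div_norm_rpow (k := 3) (by norm_num)
  exact ((finTwoArrowEquiv ℤ).symm.summable_iff
    (f := fun x : Fin 2 → ℤ => ‖x‖ ^ (-(3:ℝ)))).2 h0

lemma M_sq_le (n : ℤ × ℤ) : ‖(![n.1, n.2] : Fin 2 → ℤ)‖ ^ 2 ≤ ((n.1:ℝ))^2 + ((n.2:ℝ))^2 := by
  rw [EisensteinSeries.norm_eq_max_natAbs]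
  simp only [Matrix.cons_val_zero, Matrix.cons_val_one, Matrix.head_cons, Nat.cast_max]
  have e1 : ((n.1.natAbs:ℝ)) = |(n.1:ℝ)| := by simp [Nat.cast_natAbs]
  have e2 : ((n.2.natAbs:ℝ)) = |(n.2:ℝ)| := by simp [Nat.cast_natAbs]
  rw [e1, e2]
  rcases max_cases |(n.1:ℝ)| |(n.2:ℝ)| with ⟨h, _⟩ | ⟨h, _⟩ <;> rw [h] <;>
    nlinarith [sq_abs ((n.1:ℝ)), sq_abs ((n.2:ℝ)), sq_nonneg ((n.1:ℝ)), sq_nonneg ((n.2:ℝ))]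

lemma M_pos {n : ℤ × ℤ} (hn : n ≠ 0) : 0 < ‖(![n.1, n.2] : Fin 2 → ℤ)‖ := by
  rw [norm_pos_iff]
  intro h
  apply hn
  have h1 := congrFun h 0
  have h2 := congrFun h 1
  simp at h1 h2
  exact Prod.ext h1 h2


set_option maxHeartbeats 1000000

/-- near-field asymptote of the doubly periodic Newtonian potential: for
`(η₁,η₂,μ) ≠ 0`, `|Re η₁| ≤ 1/2`, `|Re η₂| ≤ 1/2` and `ϱ ≤ A^{1/4}` one has
`|γ + (1/8π²)(Q(η₁,η₂) + Aμ²)^{−3/2}| ≤ C·A^{−3/4}`. -/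
theorem statement14 : ∀ C₀ : ℝ, 1 ≤ C₀ → ∃ C : ℝ, 0 < C ∧
    ∀ (a11 a22 : ℝ) (a12 : ℂ), 0 < a11 → 0 < a22 →
      1 ≤ a11 * a22 - Complex.normSq a12 → IsEllipticH C₀ a11 a22 a12 →
    ∀ (η1 η2 : ℂ) (μ : ℝ), ¬(η1 = 0 ∧ η2 = 0 ∧ μ = 0) →
      |η1.re| ≤ 1 / 2 → |η2.re| ≤ 1 / 2 →
      rhoH a11 a22 a12 η1.im η2.im μ ≤ (a11 * a22 - Complex.normSq a12) ^ ((1 : ℝ) / 4) →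
      |(-(1 / (8 * Real.pi ^ 2)) * ∑' n : ℤ × ℤ,
          (Qh a11 a22 a12 (η1 + (n.1 : ℂ)) (η2 + (n.2 : ℂ))
            + (a11 * a22 - Complex.normSq a12) * μ ^ 2) ^ (-(3 : ℝ) / 2))
        + (1 / (8 * Real.pi ^ 2)) *
          (Qh a11 a22 a12 η1 η2
            + (a11 * a22 - Complex.normSq a12) * μ ^ 2) ^ (-(3 : ℝ) / 2)|
      ≤ C * (a11 * a22 - Complex.normSq a12) ^ (-(3 : ℝ) / 4) := by
  intro C₀ hC₀
  have hC0' : (0:ℝ) < C₀ := lt_of_lt_of_le one_pos hC₀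
  set K := ∑' n : ℤ × ℤ, ‖(![n.1, n.2] : Fin 2 → ℤ)‖ ^ (-(3:ℝ)) with hKdef
  have hKnn : 0 ≤ K := tsum_nonneg fun n => Real.rpow_nonneg (norm_nonneg _) _
  refine ⟨16 * C₀^2 * (K + 1), by positivity, ?_⟩
  intro a11 a22 a12 h11 h22 hA hell η1 η2 μ hne hre1 hre2 _
  set A := a11 * a22 - Complex.normSq a12 with hAdef
  have hA0 : (0:ℝ) < A := lt_of_lt_of_le one_pos hA
  set s := Real.sqrt A with hsdef
  have hs1 : (1:ℝ) ≤ s := by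
    rw [hsdef, show (1:ℝ) = Real.sqrt 1 by simp]
    exact Real.sqrt_le_sqrt hA
  have hs0 : (0:ℝ) < s := lt_of_lt_of_le one_pos hs1
  set F' : ℤ × ℤ → ℝ := fun n =>
    (Qh a11 a22 a12 (η1 + (n.1 : ℂ)) (η2 + (n.2 : ℂ)) + A * μ ^ 2) ^ (-(3 : ℝ) / 2)
    with hF'def
  -- lower bound on the base
  have hlow : ∀ n : ℤ × ℤ,
      C₀⁻¹ * s * (((n.1:ℝ))^2 + ((n.2:ℝ))^2) / 4
        ≤ Qh a11 a22 a12 (η1 + (n.1 : ℂ)) (η2 + (n.2 : ℂ)) + A * μ ^ 2 := by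
    intro n
    have h1 := (hell (η1 + (n.1:ℂ)) (η2 + (n.2:ℂ))).1
    rw [← hAdef, ← hsdef] at h1
    have e1 : (η1 + ((n.1:ℤ):ℂ)).re = η1.re + (n.1:ℝ) := by simp
    have e2 : (η2 + ((n.2:ℤ):ℂ)).re = η2.re + (n.2:ℝ) := by simp
    have hn1 : ((n.1:ℝ))^2/4 ≤ Complex.normSq (η1 + (n.1:ℂ)) := by
      rw [Complex.normSq_apply, e1]
      nlinarith [sq_shift η1.re n.1 hre1, sq_nonneg (η1 + ((n.1:ℤ):ℂ)).im]
    have hn2 : ((n.2:ℝ))^2/4 ≤ Complex.normSq (η2 + (n.2:ℂ)) := by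
      rw [Complex.normSq_apply, e2]
      nlinarith [sq_shift η2.re n.2 hre2, sq_nonneg (η2 + ((n.2:ℤ):ℂ)).im]
    have hmu : (0:ℝ) ≤ A * μ^2 := by positivity
    have hcs : (0:ℝ) ≤ C₀⁻¹ * s := by positivity
    nlinarith [mul_le_mul_of_nonneg_left (add_le_add hn1 hn2) hcs]
  have hbase_nn : ∀ n : ℤ × ℤ,
      (0:ℝ) ≤ Qh a11 a22 a12 (η1 + (n.1 : ℂ)) (η2 + (n.2 : ℂ)) + A * μ ^ 2 :=
    fun n => le_trans (by positivity) (hlow n)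
  have hF'nn : ∀ n, 0 ≤ F' n := fun n => Real.rpow_nonneg (hbase_nn n) _
  set D := 16 * C₀^2 * A ^ (-(3:ℝ)/4) with hDdef
  have hDnn : (0:ℝ) ≤ D := by positivity
  -- the key pointwise bound
  have hbound : ∀ n : ℤ × ℤ, n ≠ 0 →
      F' n ≤ D * ‖(![n.1, n.2] : Fin 2 → ℤ)‖ ^ (-(3:ℝ)) := by
    intro n hn
    have hMn : 0 < ‖(![n.1, n.2] : Fin 2 → ℤ)‖ := M_pos hn
    set e := C₀⁻¹ * s / 4 with hedef
    have he0 : (0:ℝ) < e := by positivity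
    have h1 : e * ‖(![n.1, n.2] : Fin 2 → ℤ)‖ ^ 2
        ≤ Qh a11 a22 a12 (η1 + (n.1 : ℂ)) (η2 + (n.2 : ℂ)) + A * μ ^ 2 := by
      refine le_trans ?_ (hlow n)
      have := mul_le_mul_of_nonneg_left (M_sq_le n) he0.le
      rw [hedef] at this ⊢
      linarith [this]
    have h2 : F' n ≤ (e * ‖(![n.1, n.2] : Fin 2 → ℤ)‖ ^ 2) ^ (-(3:ℝ)/2) := by
      rw [hF'def]
      exact Real.rpow_le_rpow_of_nonpos (by positivity) h1 (by norm_num)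
    have h3 : (e * ‖(![n.1, n.2] : Fin 2 → ℤ)‖ ^ 2) ^ (-(3:ℝ)/2)
        = e ^ (-(3:ℝ)/2) * ‖(![n.1, n.2] : Fin 2 → ℤ)‖ ^ (-(3:ℝ)) := by
      rw [Real.mul_rpow he0.le (by positivity)]
      congr 1
      rw [← Real.rpow_natCast ‖(![n.1, n.2] : Fin 2 → ℤ)‖ 2, ← Real.rpow_mul hMn.le]
      norm_num
    have hseq : s ^ (-(3:ℝ)/2) = A ^ (-(3:ℝ)/4) := by
      rw [hsdef, Real.sqrt_eq_rpow, ← Real.rpow_mul hA0.le]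
      norm_num
    have hee : e ^ (-(3:ℝ)/2) = ((4*C₀)⁻¹) ^ (-(3:ℝ)/2) * s ^ (-(3:ℝ)/2) := by
      rw [hedef, show C₀⁻¹ * s / 4 = (4*C₀)⁻¹ * s by rw [mul_inv]; ring,
        Real.mul_rpow (by positivity) hs0.le]
    have h5 : ((4*C₀)⁻¹ : ℝ) ^ (-(3:ℝ)/2) = (4*C₀) ^ ((3:ℝ)/2) := by
      rw [Real.inv_rpow (by positivity), ← Real.rpow_neg (by positivity)]
      norm_num
    have h6 : (4*C₀ : ℝ) ^ ((3:ℝ)/2) ≤ 16 * C₀^2 := by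
      calc (4*C₀ : ℝ) ^ ((3:ℝ)/2) ≤ (4*C₀ : ℝ) ^ (2:ℝ) :=
            Real.rpow_le_rpow_of_exponent_le (by linarith) (by norm_num)
        _ = 16 * C₀^2 := by
            rw [show (2:ℝ) = ((2:ℕ):ℝ) by norm_num, Real.rpow_natCast]; ring
    have h4 : e ^ (-(3:ℝ)/2) ≤ 16 * C₀^2 * A ^ (-(3:ℝ)/4) := by
      rw [hee, h5, hseq]
      exact mul_le_mul_of_nonneg_right h6 (Real.rpow_nonneg hA0.le _)
    calc F' n ≤ e ^ (-(3:ℝ)/2) * ‖(![n.1, n.2] : Fin 2 → ℤ)‖ ^ (-(3:ℝ)) := by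
          rw [← h3]; exact h2
      _ ≤ D * ‖(![n.1, n.2] : Fin 2 → ℤ)‖ ^ (-(3:ℝ)) := by
          rw [hDdef]
          exact mul_le_mul_of_nonneg_right h4 (Real.rpow_nonneg hMn.le _)
  -- summability
  have hsum_F' : Summable F' := by
    rw [← (({(0,0)} : Finset (ℤ × ℤ))).summable_compl_iff]
    refine Summable.of_nonneg_of_le (fun x => hF'nn x)
      (fun x => hbound x.1 ?_) (((sum_g.mul_left D)).subtype _)
    have := x.2
    simp only [Finset.mem_singleton] at this
    simpa [Prod.ext_iff] using this
  have key := Summable.tsum_eq_add_tsum_ite hsum_F' (0 : ℤ × ℤ)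
  have h00 : F' 0 = (Qh a11 a22 a12 η1 η2 + A * μ ^ 2) ^ (-(3 : ℝ) / 2) := by
    simp [hF'def]
  rw [← h00, key]
  have hsum_ite : Summable (fun n : ℤ × ℤ => if n = 0 then 0 else F' n) := by
    refine Summable.of_nonneg_of_le (fun n => ?_) (fun n => ?_) hsum_F'
    · split_ifs; exacts [le_rfl, hF'nn n]
    · split_ifs; exacts [hF'nn n, le_rfl]
  set T := ∑' n : ℤ × ℤ, (if n = 0 then 0 else F' n) with hTdef
  have hTnn : 0 ≤ T := tsum_nonneg fun n => by split_ifs; exacts [le_rfl, hF'nn n]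
  have habs : -(1 / (8 * Real.pi ^ 2)) * (F' 0 + T) + 1 / (8 * Real.pi ^ 2) * F' 0
      = -(1 / (8 * Real.pi ^ 2) * T) := by ring
  rw [habs, abs_neg, abs_of_nonneg (by positivity)]
  have hT_le : T ≤ D * K := by
    have h1 : T ≤ ∑' n : ℤ × ℤ, D * ‖(![n.1, n.2] : Fin 2 → ℤ)‖ ^ (-(3:ℝ)) := by
      refine Summable.tsum_le_tsum (fun n => ?_) hsum_ite (sum_g.mul_left D)
      split_ifs with h
      · exact mul_nonneg hDnn (Real.rpow_nonneg (norm_nonneg _) _)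
      · exact hbound n h
    rwa [tsum_mul_left, ← hKdef] at h1
  have hc1 : 1 / (8 * Real.pi ^ 2) ≤ 1 := by
    rw [div_le_one (by positivity)]
    nlinarith [Real.pi_gt_three]
  calc 1 / (8 * Real.pi ^ 2) * T ≤ 1 * T :=
        mul_le_mul_of_nonneg_right hc1 hTnn
    _ = T := one_mul T
    _ ≤ D * K := hT_le
    _ ≤ D * (K + 1) := mul_le_mul_of_nonneg_left (by linarith) hDnn
    _ = 16 * C₀^2 * (K + 1) * A ^ (-(3:ℝ)/4) := by rw [hDdef]; ring
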